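/- arXiv:1706.09860 — 3 statements merged into one kernel-verified Lean document; each statement's English description precedes it below -/
import Mathlib

section
/- Let T : ℓ∞ → ℓ∞ be a Dunford-Schwartz operator, x ∈ ℓ_p with 1 ≤ p < ∞, and α > 0. Then the cardinality of the set {s ∈ ℕ : sup_{n ≥ 1} |(1/n) Σ_{k=0}^{n−1} (T^k x)(s)| ≥ α} is at most (2‖x‖_p / α)^p. -/
/-!
Split `x = y + z` at height `α/2`: `|z| ≤ α/2` and, by Chebyshev, `‖y‖₁ ≤ (α/2)(2‖x‖_p/α)^p`.
The `ℓ∞`-contraction keeps all Cesàro averages of `z` below `α/2`, so the set in question lies in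
the set where the maximal function of `y` is at least `α/2`.

On `ℓ¹` the `ℓ¹`-contraction `T` is given by its matrix `(T e_j)(s)`; the entrywise absolute
value `S` of this matrix (the linear modulus) is a positive operator with column and row sums at
most `1`, and `|∑_{k<n} T^k y| ≤ ∑_{k<n} S^k |y|`. For such `S`, Garsia's proof of Hopf's maximal
ergodic lemma gives the weak type `(1,1)` bound
`β · #{s | sup_n (1/n) ∑_{k<n} S^k g (s) ≥ β} ≤ ‖g‖₁`.
-/

open Filter Finset Topology

/-- The supremum norm of a real sequence. -/
noncomputable def supNorm (x : ℕ → ℝ) : ℝ := ⨆ n, |x n|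

/-- `x` is a bounded sequence (i.e. `x ∈ ℓ∞`). -/
def IsBdd (x : ℕ → ℝ) : Prop := ∃ C, ∀ n, |x n| ≤ C

/-- The non-increasing rearrangement of a bounded sequence, `0`-indexed:
`(x*)_n = inf over finite F with card F ≤ n of sup_{k ∉ F} |x k|`. -/
noncomputable def rearr (x : ℕ → ℝ) (n : ℕ) : ℝ :=
  sInf { r : ℝ | ∃ F : Finset ℕ, F.card ≤ n ∧ r = ⨆ k : {k : ℕ // k ∉ F}, |x k.1| }

/-- A Dunford–Schwartz operator: a linear operator which is an `ℓ₁`-contraction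
and an `ℓ∞`-contraction. -/
def IsDS (T : (ℕ → ℝ) →ₗ[ℝ] (ℕ → ℝ)) : Prop :=
  (∀ x : ℕ → ℝ, Summable (fun n => |x n|) →
      Summable (fun n => |T x n|) ∧ ∑' n, |T x n| ≤ ∑' n, |x n|) ∧
  (∀ x : ℕ → ℝ, IsBdd x → IsBdd (T x) ∧ supNorm (T x) ≤ supNorm x)

/-- The Cesàro average `A(n,T)(x) = (1/n) ∑_{k=0}^{n-1} T^k x`. -/
noncomputable def cesaro (T : (ℕ → ℝ) →ₗ[ℝ] (ℕ → ℝ)) (n : ℕ) (x : ℕ → ℝ) : ℕ → ℝ :=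
  fun s => (∑ k ∈ Finset.range n, (⇑T)^[k] x s) / n

/-- Membership in `ℓ_p`. -/
def Memlp (p : ℝ) (x : ℕ → ℝ) : Prop := Summable (fun n => |x n| ^ p)

/-- The `ℓ_p` norm. -/
noncomputable def lpNorm (p : ℝ) (x : ℕ → ℝ) : ℝ := (∑' n, |x n| ^ p) ^ (1 / p)

theorem Set.finite_and_ncard_le_of_forall_finset_card_le {α : Type*} {S : Set α} {K : ℝ}
    (h : ∀ F : Finset α, ↑F ⊆ S → (F.card : ℝ) ≤ K) : S.Finite ∧ (S.ncard : ℝ) ≤ K := by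
  have hfin : S.Finite := by
    by_contra hinf
    obtain ⟨F, hFS, hF⟩ := Set.Infinite.exists_subset_card_eq hinf (⌊K⌋₊ + 1)
    have := h F hFS
    rw [hF] at this
    push_cast at this
    linarith [Nat.lt_floor_add_one K]
  refine ⟨hfin, ?_⟩
  simpa [Set.ncard_eq_toFinset_card S hfin] using h hfin.toFinset (by simp)

noncomputable def matMulVec (a : ℕ → ℕ → ℝ) (u : ℕ → ℝ) (s : ℕ) : ℝ := ∑' j, a s j * u j

/-- The matrices of the positive `ℓ¹`-contractions `u ↦ matMulVec a u`. -/
structure IsSubstochastic (a : ℕ → ℕ → ℝ) : Prop where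
  nonneg : ∀ s j, 0 ≤ a s j
  sum_le_one : ∀ j (F : Finset ℕ), ∑ s ∈ F, a s j ≤ 1

/-- `ergodicSum a f n = ∑_{k<n} S^k f` with `S = matMulVec a`. -/
noncomputable def ergodicSum (a : ℕ → ℕ → ℝ) (f : ℕ → ℝ) : ℕ → ℕ → ℝ
  | 0 => 0
  | n + 1 => f + matMulVec a (ergodicSum a f n)

noncomputable def maximalFun (a : ℕ → ℕ → ℝ) (g : ℕ → ℝ) (s : ℕ) : ℝ :=
  ⨆ n : ℕ, ergodicSum a g (n + 1) s / (n + 1)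

/-- Nonnegative, since the term `n = 0` is the empty sum. -/
noncomputable def maxErgodicSum (a : ℕ → ℕ → ℝ) (f : ℕ → ℝ) (N s : ℕ) : ℝ :=
  (range (N + 1)).sup' nonempty_range_add_one fun n => ergodicSum a f n s

namespace IsSubstochastic

variable {a : ℕ → ℕ → ℝ} (ha : IsSubstochastic a) {u v f g : ℕ → ℝ}
include ha

theorem le_one (s j : ℕ) : a s j ≤ 1 := by
  simpa using ha.sum_le_one j {s}

theorem summable_mul (hu : Summable fun j => |u j|) (s : ℕ) :
    Summable fun j => a s j * u j :=
  Summable.of_norm_bounded hu fun j => by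
    rw [Real.norm_eq_abs, abs_mul, abs_of_nonneg (ha.nonneg s j)]
    exact mul_le_of_le_one_left (abs_nonneg _) (ha.le_one s j)

theorem matMulVec_nonneg (hu : 0 ≤ u) : 0 ≤ matMulVec a u := fun s =>
  tsum_nonneg fun j => mul_nonneg (ha.nonneg s j) (hu j)

theorem matMulVec_mono (hu : Summable fun j => |u j|) (hv : Summable fun j => |v j|)
    (huv : u ≤ v) : matMulVec a u ≤ matMulVec a v := fun s =>
  (ha.summable_mul hu s).tsum_le_tsum
    (fun j => mul_le_mul_of_nonneg_left (huv j) (ha.nonneg s j)) (ha.summable_mul hv s)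

theorem matMulVec_sub (hu : Summable fun j => |u j|) (hv : Summable fun j => |v j|) :
    matMulVec a (u - v) = matMulVec a u - matMulVec a v := funext fun s => by
  simp only [matMulVec, Pi.sub_apply, mul_sub]
  exact (ha.summable_mul hu s).tsum_sub (ha.summable_mul hv s)

theorem abs_matMulVec_le (hu : Summable fun j => |u j|) (s : ℕ) :
    |matMulVec a u s| ≤ matMulVec a (fun j => |u j|) s := by
  have h := norm_tsum_le_tsum_norm (ha.summable_mul hu s).norm
  simpa only [matMulVec, Real.norm_eq_abs, abs_mul, abs_of_nonneg (ha.nonneg s _)] using h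

theorem sum_abs_matMulVec_le (hu : Summable fun j => |u j|) (F : Finset ℕ) :
    ∑ s ∈ F, |matMulVec a u s| ≤ ∑' j, |u j| := by
  have habs : Summable fun j => |(fun j => |u j|) j| := by simpa only [abs_abs] using hu
  calc ∑ s ∈ F, |matMulVec a u s|
      ≤ ∑ s ∈ F, ∑' j, a s j * |u j| := sum_le_sum fun s _ => ha.abs_matMulVec_le hu s
    _ = ∑' j, (∑ s ∈ F, a s j) * |u j| := by
      rw [← Summable.tsum_finsetSum fun s _ => ha.summable_mul habs s]
      simp only [sum_mul]
    _ ≤ ∑' j, |u j| := by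
      have hle : ∀ j, (∑ s ∈ F, a s j) * |u j| ≤ |u j| := fun j =>
        mul_le_of_le_one_left (abs_nonneg _) (ha.sum_le_one j F)
      have hnonneg : ∀ j, 0 ≤ (∑ s ∈ F, a s j) * |u j| := fun j =>
        mul_nonneg (sum_nonneg fun s _ => ha.nonneg s j) (abs_nonneg _)
      exact (hu.of_nonneg_of_le hnonneg hle).tsum_le_tsum hle hu

theorem summable_abs_matMulVec (hu : Summable fun j => |u j|) :
    Summable fun s => |matMulVec a u s| :=
  summable_of_sum_le (fun _ => abs_nonneg _) (ha.sum_abs_matMulVec_le hu)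

theorem tsum_abs_matMulVec_le (hu : Summable fun j => |u j|) :
    ∑' s, |matMulVec a u s| ≤ ∑' j, |u j| :=
  (ha.summable_abs_matMulVec hu).tsum_le_of_sum_le (ha.sum_abs_matMulVec_le hu)

theorem matMulVec_le (hrow : ∀ s (F : Finset ℕ), ∑ j ∈ F, a s j ≤ 1)
    (hu : Summable fun j => |u j|) {c : ℝ} (hc : 0 ≤ c) (huc : ∀ j, u j ≤ c) (s : ℕ) :
    matMulVec a u s ≤ c := by
  refine (ha.summable_mul hu s).tsum_le_of_sum_le fun F => ?_
  calc ∑ j ∈ F, a s j * u j ≤ ∑ j ∈ F, a s j * c :=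
        sum_le_sum fun j _ => mul_le_mul_of_nonneg_left (huc j) (ha.nonneg s j)
    _ = (∑ j ∈ F, a s j) * c := by rw [sum_mul]
    _ ≤ c := mul_le_of_le_one_left hc (hrow s F)

theorem summable_abs_ergodicSum (hf : Summable fun j => |f j|) (n : ℕ) :
    Summable fun s => |ergodicSum a f n s| := by
  induction n with
  | zero => simp [ergodicSum]
  | succ n ih =>
    exact (hf.add (ha.summable_abs_matMulVec ih)).of_nonneg_of_le (fun _ => abs_nonneg _)
      fun s => abs_add_le _ _

theorem ergodicSum_sub_smul (hf : Summable fun j => |f j|) (hg : Summable fun j => |g j|)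
    (c : ℝ) (n : ℕ) : ergodicSum a (f - c • g) n = ergodicSum a f n - c • ergodicSum a g n := by
  induction n with
  | zero => simp [ergodicSum]
  | succ n ih =>
    have hcg : Summable fun s => |(c • ergodicSum a g n) s| := by
      simpa only [Pi.smul_apply, smul_eq_mul, abs_mul] using
        (ha.summable_abs_ergodicSum hg n).mul_left |c|
    have hsmul : matMulVec a (c • ergodicSum a g n) = c • matMulVec a (ergodicSum a g n) :=
      funext fun s => by simp only [matMulVec, Pi.smul_apply, smul_eq_mul, mul_left_comm,
        tsum_mul_left]
    simp only [ergodicSum, ih, ha.matMulVec_sub (ha.summable_abs_ergodicSum hf n) hcg, hsmul,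
      smul_add]
    abel

theorem ergodicSum_le (hrow : ∀ s (F : Finset ℕ), ∑ j ∈ F, a s j ≤ 1)
    (hf : Summable fun j => |f j|) {c : ℝ} (hc : 0 ≤ c) (hfc : ∀ j, f j ≤ c) (n : ℕ) (s : ℕ) :
    ergodicSum a f n s ≤ n * c := by
  induction n generalizing s with
  | zero => simp [ergodicSum]
  | succ n ih =>
    have := ha.matMulVec_le hrow (ha.summable_abs_ergodicSum hf n) (by positivity) ih s
    simp only [ergodicSum, Pi.add_apply, Nat.cast_succ]
    linarith [hfc s]

theorem bddAbove_ergodicSum_div (hrow : ∀ s (F : Finset ℕ), ∑ j ∈ F, a s j ≤ 1) (hg0 : 0 ≤ g)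
    (hg : Summable g) (s : ℕ) :
    BddAbove (Set.range fun n : ℕ => ergodicSum a g (n + 1) s / (n + 1)) := by
  refine ⟨∑' j, g j, Set.forall_mem_range.2 fun n => ?_⟩
  have hgabs : Summable fun j => |g j| := by simpa only [abs_of_nonneg (hg0 _)] using hg
  have := ha.ergodicSum_le hrow hgabs (tsum_nonneg hg0) (fun j => hg.le_tsum j fun i _ => hg0 i)
    (n + 1) s
  rw [div_le_iff₀ (by positivity)]
  push_cast at this
  linarith

theorem hopf_maximal (hf : Summable fun j => |f j|) (N : ℕ) :
    0 ≤ ∑' s, {s | 0 < maxErgodicSum a f N s}.indicator f s := by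
  set M := maxErgodicSum a f N
  set E := {s | 0 < M s}
  have hP_le : ∀ n ≤ N, ergodicSum a f n ≤ M := fun n hn s =>
    le_sup' (fun n => ergodicSum a f n s) (mem_range.2 (Nat.lt_succ_of_le hn))
  have hM0 : 0 ≤ M := hP_le 0 N.zero_le
  have hM : Summable fun s => |M s| := by
    refine (summable_sum (s := range (N + 1)) fun n _ =>
      ha.summable_abs_ergodicSum hf n).of_nonneg_of_le
      (fun _ => abs_nonneg _) fun s => ?_
    obtain ⟨n, hn, hMn⟩ := exists_mem_eq_sup' nonempty_range_add_one fun n => ergodicSum a f n s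
    calc |M s| = |ergodicSum a f n s| := congrArg abs hMn
      _ ≤ ∑ n ∈ range (N + 1), |ergodicSum a f n s| :=
        single_le_sum (f := fun n => |ergodicSum a f n s|) (fun _ _ => abs_nonneg _) hn
  have hSM0 := ha.matMulVec_nonneg hM0
  have hSM : Summable (matMulVec a M) := by
    simpa only [abs_of_nonneg (hSM0 _)] using ha.summable_abs_matMulVec hM
  -- Garsia: on `E` the maximum is attained at some `n = m + 1`, where
  -- `∑_{k≤m} S^k f = f + S (∑_{k<m} S^k f) ≤ f + S M`.
  have hgarsia : ∀ s ∈ E, M s ≤ f s + matMulVec a M s := by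
    intro s hs
    obtain ⟨n, hn, hMn⟩ := exists_mem_eq_sup' nonempty_range_add_one fun n => ergodicSum a f n s
    obtain ⟨m, rfl⟩ : ∃ m, n = m + 1 := Nat.exists_eq_succ_of_ne_zero fun h0 => by
      subst h0; exact (ne_of_gt hs) hMn
    have := ha.matMulVec_mono (ha.summable_abs_ergodicSum hf m) hM
      (hP_le m (by simp at hn; omega)) s
    rw [show M s = _ from hMn]
    simpa only [ergodicSum, Pi.add_apply] using add_le_add_right this (f s)
  have hpoint : ∀ s, M s - E.indicator (matMulVec a M) s ≤ E.indicator f s := by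
    intro s
    by_cases hs : s ∈ E
    · simp only [Set.indicator_of_mem hs]; linarith [hgarsia s hs]
    · simp only [Set.indicator_of_notMem hs, sub_zero]
      exact not_lt.1 hs
  calc 0 ≤ ∑' s, M s - ∑' s, matMulVec a M s := by
        simpa only [sub_nonneg, abs_of_nonneg (hM0 _), abs_of_nonneg (hSM0 _)] using
          ha.tsum_abs_matMulVec_le hM
    _ ≤ ∑' s, M s - ∑' s, E.indicator (matMulVec a M) s := by
        gcongr ?_ - ?_
        exact (hSM.indicator E).tsum_le_tsum (Set.indicator_le_self' fun s _ => hSM0 s) hSM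
    _ = ∑' s, (M s - E.indicator (matMulVec a M) s) := (hM.of_abs.tsum_sub (hSM.indicator E)).symm
    _ ≤ ∑' s, E.indicator f s :=
        (hM.of_abs.sub (hSM.indicator E)).tsum_le_tsum hpoint (hf.of_abs.indicator E)

theorem card_mul_le_tsum (hrow : ∀ s (F : Finset ℕ), ∑ j ∈ F, a s j ≤ 1) (hg0 : 0 ≤ g)
    (hg : Summable g) {γ : ℝ} (hγ : 0 ≤ γ) (F : Finset ℕ)
    (hF : ∀ s ∈ F, ∃ n : ℕ, γ * (n + 1) < ergodicSum a g (n + 1) s) :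
    F.card * γ ≤ ∑' s, g s := by
  choose! n hn using hF
  set χ : ℕ → ℝ := (↑F : Set ℕ).indicator 1
  have hχ : Summable χ :=
    summable_of_ne_finset_zero (s := F) fun _ hs => Set.indicator_of_notMem hs _
  have hχ0 : 0 ≤ χ := Set.indicator_nonneg fun _ _ => zero_le_one
  have hχabs : Summable fun j => |χ j| := by simpa only [abs_of_nonneg (hχ0 _)] using hχ
  have hgabs : Summable fun j => |g j| := by simpa only [abs_of_nonneg (hg0 _)] using hg
  have hχ_card : ∑' s, χ s = F.card := by
    rw [tsum_eq_sum (s := F) fun _ hs => Set.indicator_of_notMem hs _,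
      sum_indicator_subset _ subset_rfl]
    simp
  -- Hopf's lemma for `g - γ χ`, whose ergodic sums are positive at every point of `F`
  set E := {s | 0 < maxErgodicSum a (g - γ • χ) (F.sup n + 1) s}
  have hFE : (↑F : Set ℕ) ⊆ E := by
    intro s hs
    have hχ_le := ha.ergodicSum_le hrow hχabs zero_le_one
      (Set.indicator_le_self' fun _ _ => zero_le_one) (n s + 1) s
    calc 0 < ergodicSum a g (n s + 1) s - γ * ergodicSum a χ (n s + 1) s := by
          push_cast at hχ_le
          linarith [hn s hs, mul_le_mul_of_nonneg_left hχ_le hγ]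
      _ = ergodicSum a (g - γ • χ) (n s + 1) s := by
          rw [ha.ergodicSum_sub_smul hgabs hχabs]; rfl
      _ ≤ maxErgodicSum a (g - γ • χ) (F.sup n + 1) s :=
          le_sup' (fun m => ergodicSum a (g - γ • χ) m s)
            (mem_range.2 (by have := le_sup (f := n) hs; omega))
  have hind : E.indicator (g - γ • χ) = E.indicator g - γ • χ := funext fun s => by
    by_cases hs : s ∈ E
    · simp [hs]
    · simp [hs, χ, Set.indicator_of_notMem (fun h => hs (hFE h))]
  have hf : Summable fun j => |(g - γ • χ) j| :=
    (hgabs.add (hχabs.mul_left |γ|)).of_nonneg_of_le (fun _ => abs_nonneg _) fun j => by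
      simpa only [Pi.sub_apply, Pi.smul_apply, smul_eq_mul, abs_mul] using abs_sub (g j) (γ * χ j)
  have hopf := ha.hopf_maximal hf (F.sup n + 1)
  have hsplit : ∑' s, (E.indicator g - γ • χ) s = ∑' s, E.indicator g s - γ * F.card := by
    simp only [Pi.sub_apply, Pi.smul_apply, smul_eq_mul]
    rw [(hg.indicator E).tsum_sub (hχ.mul_left γ), tsum_mul_left, hχ_card]
  have hEg : ∑' s, E.indicator g s ≤ ∑' s, g s :=
    (hg.indicator E).tsum_le_tsum (Set.indicator_le_self' fun s _ => hg0 s) hg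
  rw [hind, hsplit] at hopf
  linarith

theorem weak_maximal (hrow : ∀ s (F : Finset ℕ), ∑ j ∈ F, a s j ≤ 1) (hg0 : 0 ≤ g)
    (hg : Summable g) {β : ℝ} (hβ : 0 < β) :
    {s | β ≤ maximalFun a g s}.Finite ∧
      ({s | β ≤ maximalFun a g s}.ncard : ℝ) ≤ (∑' s, g s) / β := by
  refine Set.finite_and_ncard_le_of_forall_finset_card_le fun F hF => ?_
  rw [le_div_iff₀ hβ]
  have hγ : ∀ γ ∈ Set.Ico 0 β, (F.card : ℝ) * γ ≤ ∑' s, g s := fun γ ⟨hγ0, hγβ⟩ =>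
    ha.card_mul_le_tsum hrow hg0 hg hγ0 F fun s hs => by
      obtain ⟨n, hn⟩ := exists_lt_of_lt_ciSup (hγβ.trans_le (hF hs))
      exact ⟨n, by rwa [lt_div_iff₀ (by positivity)] at hn⟩
  exact le_of_tendsto ((continuous_const.mul continuous_id).tendsto β |>.mono_left
    nhdsWithin_le_nhds) (Filter.eventually_of_mem (Ico_mem_nhdsLT hβ) hγ)

end IsSubstochastic

/-- The linear modulus of `T`. -/
noncomputable def dsModulus (T : (ℕ → ℝ) →ₗ[ℝ] (ℕ → ℝ)) (s j : ℕ) : ℝ := |T (Pi.single j 1) s|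

namespace IsDS

variable {T : (ℕ → ℝ) →ₗ[ℝ] (ℕ → ℝ)} (hT : IsDS T) {w : ℕ → ℝ}
include hT

theorem abs_apply_le_tsum (hw : Summable fun j => |w j|) (s : ℕ) : |T w s| ≤ ∑' j, |w j| :=
  ((hT.1 w hw).1.le_tsum s fun _ _ => abs_nonneg _).trans (hT.1 w hw).2

theorem abs_apply_le {c : ℝ} (hw : ∀ j, |w j| ≤ c) (s : ℕ) : |T w s| ≤ c := by
  obtain ⟨⟨C, hC⟩, hsup⟩ := hT.2 w ⟨c, hw⟩
  exact (le_ciSup ⟨C, Set.forall_mem_range.2 hC⟩ s).trans (hsup.trans (ciSup_le hw))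

theorem isSubstochastic_dsModulus : IsSubstochastic (dsModulus T) where
  nonneg _ _ := abs_nonneg _
  sum_le_one j F := by
    have hsingle : Summable fun n => |Pi.single j (1 : ℝ) n| :=
      summable_of_ne_finset_zero (s := {j}) fun n hn => by simp_all
    have htsum : ∑' n, |Pi.single j (1 : ℝ) n| = 1 := by
      rw [tsum_eq_single j fun n hn => by simp [hn]]; simp
    calc ∑ s ∈ F, dsModulus T s j ≤ ∑' s, |T (Pi.single j 1) s| :=
          (hT.1 _ hsingle).1.sum_le_tsum F fun _ _ => abs_nonneg _
      _ ≤ 1 := (hT.1 _ hsingle).2.trans_eq htsum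

-- Test `T` on the vector of signs of the `s`-th row, which has sup norm at most `1`.
theorem sum_dsModulus_le (s : ℕ) (F : Finset ℕ) : ∑ j ∈ F, dsModulus T s j ≤ 1 := by
  set w : ℕ → ℝ := ∑ j ∈ F, (SignType.sign (T (Pi.single j 1) s) : ℝ) • Pi.single j 1
  have hw : ∀ n, |w n| ≤ 1 := fun n => by
    simp only [w, Finset.sum_apply, Pi.smul_apply, Pi.single_apply, smul_eq_mul, mul_ite, mul_one,
      mul_zero, sum_ite_eq]
    split_ifs
    · rcases SignType.sign (T (Pi.single n 1) s) with _ | _ | _ <;> simp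
    · simp
  have hTw : T w s = ∑ j ∈ F, dsModulus T s j := by
    simp [w, map_sum, map_smul, dsModulus, sign_mul_self]
  exact hTw ▸ (le_abs_self _).trans (hT.abs_apply_le hw s)

theorem summable_norm_apply_single_mul (hw : Summable fun j => |w j|) (s : ℕ) :
    Summable fun j => ‖T (Pi.single j 1) s * w j‖ := by
  simpa only [Real.norm_eq_abs, abs_mul, abs_abs, dsModulus] using
    hT.isSubstochastic_dsModulus.summable_mul (u := fun j => |w j|)
      (by simpa only [abs_abs] using hw) s

theorem hasSum_apply (hw : Summable fun j => |w j|) (s : ℕ) :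
    HasSum (fun j => T (Pi.single j 1) s * w j) (T w s) := by
  rw [hasSum_iff_tendsto_nat_of_summable_norm (hT.summable_norm_apply_single_mul hw s)]
  -- The `m`-th partial sum is `T` applied to the truncation of `w` to `[0, m)`.
  have htail : ∀ m : ℕ, |T w s - ∑ j ∈ range m, T (Pi.single j 1) s * w j| ≤
      ∑' j : {j // j ∉ range m}, |w j| := by
    intro m
    set S : Set ℕ := ↑(range m)
    have htrunc : ∑ j ∈ range m, w j • Pi.single j (1 : ℝ) = S.indicator w :=
      funext fun n => by simp [S, Finset.sum_apply, Pi.single_apply, Set.indicator_apply]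
    have hrest : T w s - ∑ j ∈ range m, T (Pi.single j 1) s * w j = T (Sᶜ.indicator w) s := by
      rw [Set.indicator_compl, map_sub, ← htrunc, map_sum]
      simp [mul_comm]
    have habs : (fun j => |Sᶜ.indicator w j|) = Sᶜ.indicator fun j => |w j| :=
      funext fun j => by simp only [← Real.norm_eq_abs, norm_indicator_eq_indicator_norm]
    have hind : Summable fun j => |Sᶜ.indicator w j| := habs ▸ hw.indicator _
    rw [hrest]
    refine (hT.abs_apply_le_tsum hind s).trans_eq ?_
    rw [habs]
    exact (_root_.tsum_subtype _ fun j => |w j|).symm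
  refine tendsto_iff_dist_tendsto_zero.2 (squeeze_zero (fun _ => dist_nonneg) (fun m => ?_)
    ((tendsto_tsum_compl_atTop_zero fun j => |w j|).comp tendsto_finset_range))
  rw [Real.dist_eq, abs_sub_comm]
  exact htail m

theorem abs_apply_le_matMulVec (hw : Summable fun j => |w j|) (s : ℕ) :
    |T w s| ≤ matMulVec (dsModulus T) (fun j => |w j|) s := by
  rw [(hT.hasSum_apply hw s).tsum_eq.symm]
  simpa only [matMulVec, dsModulus, Real.norm_eq_abs, abs_mul] using
    norm_tsum_le_tsum_norm (hT.summable_norm_apply_single_mul hw s)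

theorem abs_sum_iterate_le {y : ℕ → ℝ} (hy : Summable fun j => |y j|) (n s : ℕ) :
    |∑ k ∈ range n, (⇑T)^[k] y s| ≤ ergodicSum (dsModulus T) (fun j => |y j|) n s := by
  have ha := hT.isSubstochastic_dsModulus
  have hy' : Summable fun j => |(fun j => |y j|) j| := by simpa only [abs_abs] using hy
  induction n generalizing s with
  | zero => simp [ergodicSum]
  | succ n ih =>
    set v : ℕ → ℝ := fun t => ∑ k ∈ range n, (⇑T)^[k] y t
    have hv : Summable fun j => |v j| :=
      (ha.summable_abs_ergodicSum hy' n).of_nonneg_of_le (fun _ => abs_nonneg _) fun j =>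
        (ih j).trans (le_abs_self _)
    have hsplit : ∑ k ∈ range (n + 1), (⇑T)^[k] y s = y s + T v s := by
      have hv_eq : v = ∑ k ∈ range n, (⇑T)^[k] y := funext fun t => (Finset.sum_apply t _ _).symm
      rw [hv_eq, map_sum, Finset.sum_apply, sum_range_succ', add_comm]
      simp only [Function.iterate_succ_apply', Function.iterate_zero_apply]
    calc |∑ k ∈ range (n + 1), (⇑T)^[k] y s| = |y s + T v s| := by rw [hsplit]
      _ ≤ |y s| + |T v s| := abs_add_le _ _
      _ ≤ |y s| + matMulVec (dsModulus T) (fun j => |v j|) s := by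
          gcongr; exact hT.abs_apply_le_matMulVec hv s
      _ ≤ |y s| + matMulVec (dsModulus T) (ergodicSum (dsModulus T) (fun j => |y j|) n) s := by
          gcongr
          exact ha.matMulVec_mono (by simpa only [abs_abs] using hv)
            (ha.summable_abs_ergodicSum hy' n) ih s
      _ = ergodicSum (dsModulus T) (fun j => |y j|) (n + 1) s := rfl

theorem abs_cesaro_le {z : ℕ → ℝ} {c : ℝ} (hz : ∀ j, |z j| ≤ c) (n s : ℕ) :
    |cesaro T n z s| ≤ c := by
  have hiter : ∀ k j, |(⇑T)^[k] z j| ≤ c := by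
    intro k
    induction k with
    | zero => exact hz
    | succ k ih => intro j; rw [Function.iterate_succ_apply']; exact hT.abs_apply_le ih j
  rw [cesaro, abs_div, Nat.abs_cast]
  refine div_le_of_le_mul₀ (Nat.cast_nonneg _) ((abs_nonneg _).trans (hz 0)) ?_
  calc |∑ k ∈ range n, (⇑T)^[k] z s| ≤ ∑ k ∈ range n, |(⇑T)^[k] z s| := abs_sum_le_sum_abs _ _
    _ ≤ ∑ _k ∈ range n, c := sum_le_sum fun k _ => hiter k s
    _ = c * n := by simp [mul_comm]

theorem iSup_abs_cesaro_le {y z : ℕ → ℝ} (hy : Summable fun j => |y j|) {c : ℝ}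
    (hz : ∀ j, |z j| ≤ c) (s : ℕ) :
    ⨆ n : ℕ, |cesaro T (n + 1) (y + z) s| ≤ maximalFun (dsModulus T) (fun j => |y j|) s + c := by
  refine ciSup_le fun n => ?_
  have hsplit : cesaro T (n + 1) (y + z) s = cesaro T (n + 1) y s + cesaro T (n + 1) z s := by
    simp only [cesaro, ← add_div, ← sum_add_distrib, ← Module.End.coe_pow, map_add, Pi.add_apply]
  have hy_le : |cesaro T (n + 1) y s| ≤
      ergodicSum (dsModulus T) (fun j => |y j|) (n + 1) s / (n + 1) := by
    rw [cesaro, abs_div, Nat.abs_cast]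
    push_cast
    gcongr
    exact hT.abs_sum_iterate_le hy (n + 1) s
  calc |cesaro T (n + 1) (y + z) s| ≤ |cesaro T (n + 1) y s| + |cesaro T (n + 1) z s| :=
        hsplit ▸ abs_add_le _ _
    _ ≤ ergodicSum (dsModulus T) (fun j => |y j|) (n + 1) s / (n + 1) + c :=
        add_le_add hy_le (hT.abs_cesaro_le hz _ s)
    _ ≤ maximalFun (dsModulus T) (fun j => |y j|) s + c := by
        gcongr
        exact le_ciSup (hT.isSubstochastic_dsModulus.bddAbove_ergodicSum_div hT.sum_dsModulus_le
          (fun j => abs_nonneg (y j)) hy s) n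

end IsDS

theorem lpNorm_rpow {p : ℝ} (hp : p ≠ 0) (x : ℕ → ℝ) : lpNorm p x ^ p = ∑' j, |x j| ^ p := by
  rw [lpNorm, one_div, Real.rpow_inv_rpow (tsum_nonneg fun _ => by positivity) hp]

theorem Memlp.exists_summable_add_bounded {p : ℝ} (hp : 1 ≤ p) {x : ℕ → ℝ} (hx : Memlp p x)
    {β : ℝ} (hβ : 0 < β) :
    ∃ y z : ℕ → ℝ, x = y + z ∧ Summable (fun j => |y j|) ∧
      ∑' j, |y j| ≤ β * (lpNorm p x / β) ^ p ∧ ∀ j, |z j| ≤ β := by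
  set y := {j | β < |x j|}.indicator x
  have hle : ∀ j, |y j| ≤ β * (|x j| / β) ^ p := fun j => by
    by_cases h : β < |x j|
    · calc |y j| = β * (|x j| / β) := by
            rw [show y j = x j from Set.indicator_of_mem (s := {j | β < |x j|}) h x,
              mul_div_cancel₀ _ hβ.ne']
        _ ≤ β * (|x j| / β) ^ p := by
          gcongr
          exact Real.self_le_rpow_of_one_le ((one_le_div hβ).2 h.le) hp
    · rw [show y j = 0 from Set.indicator_of_notMem (s := {j | β < |x j|}) h x, abs_zero]
      positivity
  have hdiv : (fun j => β * (|x j| / β) ^ p) = fun j => β / β ^ p * |x j| ^ p := funext fun j => by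
    rw [Real.div_rpow (abs_nonneg _) hβ.le]; ring
  have hsum : Summable fun j => β * (|x j| / β) ^ p := hdiv ▸ Summable.mul_left _ hx
  refine ⟨y, x - y, (add_sub_cancel y x).symm,
    hsum.of_nonneg_of_le (fun _ => abs_nonneg _) hle, ?_, fun j => ?_⟩
  · calc ∑' j, |y j| ≤ ∑' j, β * (|x j| / β) ^ p :=
          (hsum.of_nonneg_of_le (fun _ => abs_nonneg _) hle).tsum_le_tsum hle hsum
      _ = β * (lpNorm p x / β) ^ p := by
          have hnorm : 0 ≤ lpNorm p x := Real.rpow_nonneg (tsum_nonneg fun _ => by positivity) _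
          rw [hdiv, tsum_mul_left, ← lpNorm_rpow (by linarith), Real.div_rpow hnorm hβ.le]
          ring
  · by_cases h : β < |x j|
    · simp [y, h, hβ.le]
    · simpa [y, h] using not_lt.1 h

/-- Maximal ergodic estimate: for a Dunford–Schwartz operator `T`, `x ∈ ℓ_p`
(`1 ≤ p < ∞`) and `α > 0`, the set where the ergodic maximal function is `≥ α`
has cardinality at most `(2‖x‖_p/α)^p`. -/
theorem stmt4 (T : (ℕ → ℝ) →ₗ[ℝ] (ℕ → ℝ)) (hT : IsDS T)
    (p : ℝ) (hp : 1 ≤ p) (x : ℕ → ℝ) (hx : Memlp p x) (α : ℝ) (hα : 0 < α) :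
    {s : ℕ | α ≤ ⨆ n : ℕ, |cesaro T (n + 1) x s|}.Finite ∧
    ({s : ℕ | α ≤ ⨆ n : ℕ, |cesaro T (n + 1) x s|}.ncard : ℝ) ≤
      (2 * lpNorm p x / α) ^ p := by
  obtain ⟨y, z, rfl, hy, hy_le, hz⟩ := hx.exists_summable_add_bounded hp (half_pos hα)
  set E := {s | α / 2 ≤ maximalFun (dsModulus T) (fun j => |y j|) s}
  have hsub : {s : ℕ | α ≤ ⨆ n : ℕ, |cesaro T (n + 1) (y + z) s|} ⊆ E := fun s (hs : α ≤ _) =>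
    show α / 2 ≤ _ by linarith [hT.iSup_abs_cesaro_le hy hz s]
  obtain ⟨hfin, hcard⟩ := hT.isSubstochastic_dsModulus.weak_maximal hT.sum_dsModulus_le
    (fun j => abs_nonneg (y j)) hy (half_pos hα)
  refine ⟨hfin.subset hsub, ?_⟩
  calc _ ≤ (E.ncard : ℝ) := by exact_mod_cast Set.ncard_le_ncard hsub hfin
    _ ≤ (∑' j, |y j|) / (α / 2) := hcard
    _ ≤ (lpNorm p (y + z) / (α / 2)) ^ p := by rw [div_le_iff₀ (half_pos hα)]; linarith
    _ = (2 * lpNorm p (y + z) / α) ^ p := by congr 1; field_simp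
end

section
/- If T : ℓ∞ → ℓ∞ is a Dunford-Schwartz operator and E is a fully symmetric sequence space, then T(E) ⊆ E and ‖T‖_{E→E} ≤ 1. -/
open Filter Finset Topology

/-- A fully symmetric sequence space: a nonzero linear subspace of `ℓ∞` with a complete
norm `N` such that Hardy–Littlewood–Pólya majorization `x ≺ y`, `y ∈ E`, `x ∈ ℓ∞` imply
`x ∈ E` and `N x ≤ N y`. -/
structure FullySymmSeqSpace where
  carrier : Submodule ℝ (ℕ → ℝ)
  nontrivial : carrier ≠ ⊥
  bdd : ∀ x ∈ carrier, IsBdd x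
  N : (ℕ → ℝ) → ℝ
  N_zero : N 0 = 0
  N_pos : ∀ x ∈ carrier, x ≠ 0 → 0 < N x
  N_add : ∀ x ∈ carrier, ∀ y ∈ carrier, N (x + y) ≤ N x + N y
  N_smul : ∀ (c : ℝ), ∀ x ∈ carrier, N (c • x) = |c| * N x
  complete : ∀ f : ℕ → (ℕ → ℝ), (∀ k, f k ∈ carrier) →
    (∀ ε > 0, ∃ K, ∀ m ≥ K, ∀ n ≥ K, N (f m - f n) < ε) →
    ∃ x ∈ carrier, Filter.Tendsto (fun k => N (f k - x)) Filter.atTop (nhds 0)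
  fullySymm : ∀ y ∈ carrier, ∀ x : ℕ → ℝ, IsBdd x →
    (∀ k, ∑ n ∈ Finset.range (k + 1), rearr x n ≤ ∑ n ∈ Finset.range (k + 1), rearr y n) →
    x ∈ carrier ∧ N x ≤ N y

/-!
Calderón–Mityagin: for `t = x*_k`, split `x = u + v` with `v` the truncation of `x` at height
`t` and `u` finitely supported. The `ℓ∞`-contractivity gives `(Tx)*_n ≤ (Tu)*_n + t`, the
`ℓ₁`-contractivity gives `∑_{n ≤ k} (Tu)*_n ≤ ‖u‖₁`, and `‖u‖₁ + (k + 1) t ≤ ∑_{n ≤ k} x*_n`.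
Hence `Tx ≺ x`, and full symmetry of `E` does the rest.
-/

instance Finset.nonempty_subtype_notMem (F : Finset ℕ) : Nonempty {k : ℕ // k ∉ F} :=
  let ⟨k, hk⟩ := Infinite.exists_notMem_finset F
  ⟨⟨k, hk⟩⟩

section Rearrangement

variable {x a b : ℕ → ℝ}

lemma IsBdd.abs_le_supNorm (hx : IsBdd x) (n : ℕ) : |x n| ≤ supNorm x :=
  let ⟨C, hC⟩ := hx
  le_ciSup ⟨C, by rintro r ⟨m, rfl⟩; exact hC m⟩ n

lemma IsBdd.of_summable_abs (hx : Summable fun n => |x n|) : IsBdd x :=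
  ⟨∑' n, |x n|, fun n => hx.le_tsum n fun _ _ => abs_nonneg _⟩

lemma IsBdd.bddAbove_abs_compl (hx : IsBdd x) (F : Finset ℕ) :
    BddAbove (Set.range fun k : {k : ℕ // k ∉ F} => |x k.1|) :=
  let ⟨C, hC⟩ := hx
  ⟨C, by rintro r ⟨k, rfl⟩; exact hC k.1⟩

lemma abs_le_iSup_abs_compl (hx : IsBdd x) {F : Finset ℕ} {k : ℕ} (hk : k ∉ F) :
    |x k| ≤ ⨆ k : {k : ℕ // k ∉ F}, |x k.1| :=
  le_ciSup (hx.bddAbove_abs_compl F) ⟨k, hk⟩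

lemma iSup_abs_compl_nonneg (x : ℕ → ℝ) (F : Finset ℕ) :
    0 ≤ ⨆ k : {k : ℕ // k ∉ F}, |x k.1| :=
  Real.iSup_nonneg fun _ => abs_nonneg _

lemma rearr_nonneg (x : ℕ → ℝ) (n : ℕ) : 0 ≤ rearr x n :=
  Real.sInf_nonneg fun _ ⟨F, _, hr⟩ => hr ▸ iSup_abs_compl_nonneg x F

lemma rearr_le_iSup_abs_compl {n : ℕ} {F : Finset ℕ} (hF : F.card ≤ n) :
    rearr x n ≤ ⨆ k : {k : ℕ // k ∉ F}, |x k.1| :=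
  csInf_le ⟨0, fun _ ⟨G, _, hr⟩ => hr ▸ iSup_abs_compl_nonneg x G⟩ ⟨F, hF, rfl⟩

lemma le_rearr {c : ℝ} {n : ℕ} (hx : IsBdd x)
    (h : ∀ F : Finset ℕ, F.card ≤ n → ∃ k ∉ F, c ≤ |x k|) : c ≤ rearr x n := by
  refine le_csInf ⟨_, ∅, Nat.zero_le n, rfl⟩ ?_
  rintro r ⟨F, hF, rfl⟩
  obtain ⟨k, hk, hck⟩ := h F hF
  exact hck.trans (abs_le_iSup_abs_compl hx hk)

lemma rearr_antitone (x : ℕ → ℝ) : Antitone (rearr x) := fun _ _ hmn =>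
  le_csInf ⟨_, ∅, Nat.zero_le _, rfl⟩ fun _ ⟨_, hF, hr⟩ =>
    hr ▸ rearr_le_iSup_abs_compl (hF.trans hmn)

lemma le_rearr_of_lt_card {c : ℝ} {n : ℕ} {S : Finset ℕ} (hx : IsBdd x) (hS : n < S.card)
    (hc : ∀ s ∈ S, c ≤ |x s|) : c ≤ rearr x n :=
  le_rearr hx fun F hF =>
    have : ¬ S ⊆ F := fun h => by have := Finset.card_le_card h; omega
    let ⟨s, hsS, hsF⟩ := Finset.not_subset.mp this
    ⟨s, hsF, hc s hsS⟩

lemma card_le_of_rearr_lt_abs {n : ℕ} {S : Finset ℕ} (hx : IsBdd x)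
    (hS : ∀ s ∈ S, rearr x n < |x s|) : S.card ≤ n := by
  by_contra! hlt
  obtain ⟨s₀, hs₀, hmin⟩ := S.exists_min_image (fun s => |x s|) (Finset.card_pos.mp (by omega))
  exact (hS s₀ hs₀).not_ge (le_rearr_of_lt_card hx hlt hmin)

lemma finite_setOf_rearr_lt_abs (hx : IsBdd x) (n : ℕ) : {s | rearr x n < |x s|}.Finite := by
  by_contra hinf
  obtain ⟨S, hS, hcard⟩ := Set.Infinite.exists_subset_card_eq hinf (n + 1)
  have := card_le_of_rearr_lt_abs hx fun s hs => hS hs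
  omega

lemma rearr_add_le (ha : IsBdd a) (hb : IsBdd b) (n : ℕ) :
    rearr (a + b) n ≤ rearr a n + supNorm b := by
  rw [← sub_le_iff_le_add]
  refine le_csInf ⟨_, ∅, Nat.zero_le n, rfl⟩ ?_
  rintro r ⟨F, hF, rfl⟩
  rw [sub_le_iff_le_add]
  refine (rearr_le_iSup_abs_compl hF).trans (ciSup_le fun k => ?_)
  calc |(a + b) k.1| ≤ |a k.1| + |b k.1| := abs_add_le _ _
    _ ≤ _ := add_le_add (abs_le_iSup_abs_compl ha k.2) (hb.abs_le_supNorm k.1)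

lemma sum_abs_le_sum_rearr (hx : IsBdd x) (S : Finset ℕ) :
    ∑ s ∈ S, |x s| ≤ ∑ n ∈ Finset.range S.card, rearr x n := by
  induction S using Finset.induction_on_min_value (fun s => |x s|) with
  | empty => simp
  | insert s S hsS hmin ih =>
    rw [Finset.sum_insert hsS, Finset.card_insert_of_notMem hsS, Finset.sum_range_succ, add_comm]
    refine add_le_add ih (le_rearr_of_lt_card hx (Finset.card_lt_card (Finset.ssubset_insert hsS))
      fun r hr => ?_)
    rcases Finset.mem_insert.mp hr with rfl | hr
    exacts [le_rfl, hmin r hr]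

lemma exists_forall_abs_le_of_summable (ha : Summable fun n => |a n|) :
    ∃ k₀, ∀ n, |a n| ≤ |a k₀| := by
  by_cases hz : ∀ n, a n = 0
  · exact ⟨0, fun n => by simp [hz]⟩
  obtain ⟨m, hm⟩ := not_forall.mp hz
  have htend : Tendsto (fun n => |a n|) (cocompact ℕ) (𝓝 0) := by
    rw [cocompact_eq_atTop]
    exact ha.tendsto_atTop_zero
  exact (continuous_of_discreteTopology.abs).exists_forall_ge' m
    (htend.eventually_le_const (abs_pos.mpr hm))

lemma rearr_succ_le_rearr_update_zero (ha : IsBdd a) (k₀ n : ℕ) :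
    rearr a (n + 1) ≤ rearr (Function.update a k₀ 0) n := by
  have hbdd : IsBdd (Function.update a k₀ 0) :=
    let ⟨C, hC⟩ := ha
    ⟨max C 0, fun m => by
      rw [Function.update_apply]
      split_ifs
      · simp
      · exact (hC m).trans (le_max_left _ _)⟩
  refine le_csInf ⟨_, ∅, Nat.zero_le n, rfl⟩ ?_
  rintro r ⟨F, hF, rfl⟩
  refine (rearr_le_iSup_abs_compl ((Finset.card_insert_le k₀ F).trans (by omega))).trans
    (ciSup_le fun k => ?_)
  have hk := k.2
  simp only [Finset.mem_insert, not_or] at hk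
  obtain ⟨hk₀, hkF⟩ := hk
  simpa [Function.update_apply, hk₀] using abs_le_iSup_abs_compl hbdd hkF

/-- Proved by peeling off a largest entry, which bounds `a*_0`, and using
`a*_{n+1} ≤ (a with that entry set to zero)*_n`. -/
lemma sum_rearr_le_tsum_abs (ha : Summable fun n => |a n|) (m : ℕ) :
    ∑ n ∈ Finset.range m, rearr a n ≤ ∑' n, |a n| := by
  induction m generalizing a with
  | zero => simpa using tsum_nonneg fun n => abs_nonneg (a n)
  | succ m ih =>
    obtain ⟨k₀, hk₀⟩ := exists_forall_abs_le_of_summable ha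
    set a' := Function.update a k₀ 0
    have habs : ∀ n, |a' n| = if n = k₀ then 0 else |a n| := fun n => by
      simp only [a', Function.update_apply]; split_ifs <;> simp
    have ha' : Summable fun n => |a' n| :=
      ha.of_nonneg_of_le (fun n => abs_nonneg _) fun n => by
        rw [habs]; split_ifs <;> simp
    have hbdd := IsBdd.of_summable_abs ha
    have h₀ : rearr a 0 ≤ |a k₀| :=
      (rearr_le_iSup_abs_compl (F := ∅) le_rfl).trans (ciSup_le fun k => hk₀ k.1)
    calc ∑ n ∈ Finset.range (m + 1), rearr a n
        = rearr a 0 + ∑ n ∈ Finset.range m, rearr a (n + 1) := by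
          rw [Finset.sum_range_succ', add_comm]
      _ ≤ |a k₀| + ∑ n ∈ Finset.range m, rearr a' n :=
          add_le_add h₀ (Finset.sum_le_sum fun n _ => rearr_succ_le_rearr_update_zero hbdd k₀ n)
      _ ≤ |a k₀| + ∑' n, |a' n| := add_le_add le_rfl (ih ha')
      _ = ∑' n, |a n| := by
          rw [ha.tsum_eq_add_tsum_ite k₀]
          exact congrArg _ (tsum_congr fun n => habs n)

end Rearrangement

section Truncation

def truncate (t : ℝ) (x : ℕ → ℝ) : ℕ → ℝ := fun n => max (-t) (min (x n) t)

variable {t : ℝ} {x : ℕ → ℝ}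

lemma abs_truncate_le (ht : 0 ≤ t) (n : ℕ) : |truncate t x n| ≤ t :=
  abs_le.mpr ⟨le_max_left _ _, max_le (by linarith) (min_le_right _ _)⟩

lemma abs_sub_truncate (ht : 0 ≤ t) (n : ℕ) :
    |x n - truncate t x n| = max (|x n| - t) 0 := by
  simp only [truncate]
  grind [abs_of_nonneg, abs_of_nonpos]

lemma supNorm_truncate_le (ht : 0 ≤ t) : supNorm (truncate t x) ≤ t :=
  ciSup_le (abs_truncate_le ht)

lemma abs_sub_truncate_rearr_eq_zero (hx : IsBdd x) {k s : ℕ}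
    (hs : s ∉ (finite_setOf_rearr_lt_abs hx k).toFinset) :
    |x s - truncate (rearr x k) x s| = 0 := by
  rw [Set.Finite.mem_toFinset, Set.mem_ofPred_eq, not_lt] at hs
  rw [abs_sub_truncate (rearr_nonneg x k), max_eq_right (sub_nonpos.mpr hs)]

lemma summable_abs_sub_truncate_rearr (hx : IsBdd x) (k : ℕ) :
    Summable fun s => |x s - truncate (rearr x k) x s| :=
  summable_of_ne_finset_zero fun _ hs => abs_sub_truncate_rearr_eq_zero hx hs

/-- Only the at most `k` entries above `t = x*_k` contribute to the left side, each by
`|x s| - t`; the remaining `k + 1 - card` terms `x*_n ≥ t` of the right side absorb the rest. -/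
lemma tsum_abs_sub_truncate_rearr_add_le (hx : IsBdd x) (k : ℕ) :
    ∑' s, |x s - truncate (rearr x k) x s| + (k + 1) * rearr x k ≤
      ∑ n ∈ Finset.range (k + 1), rearr x n := by
  set t := rearr x k
  set S := (finite_setOf_rearr_lt_abs hx k).toFinset
  have hS : ∀ s ∈ S, t < |x s| := fun s hs => by simpa [S] using hs
  have hcard : S.card ≤ k := card_le_of_rearr_lt_abs hx hS
  have htsum : ∑' s, |x s - truncate t x s| = ∑ s ∈ S, (|x s| - t) := by
    rw [tsum_eq_sum fun _ hs => abs_sub_truncate_rearr_eq_zero hx hs]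
    refine Finset.sum_congr rfl fun s hs => ?_
    rw [abs_sub_truncate (rearr_nonneg x k), max_eq_left (sub_nonneg.mpr (hS s hs).le)]
  have hsum : ∑ s ∈ S, (|x s| - t) ≤ ∑ n ∈ Finset.range S.card, (rearr x n - t) := by
    simp only [Finset.sum_sub_distrib, Finset.sum_const, Finset.card_range]
    linarith [sum_abs_le_sum_rearr hx S]
  have hextend : ∑ n ∈ Finset.range S.card, (rearr x n - t) ≤
      ∑ n ∈ Finset.range (k + 1), (rearr x n - t) :=
    Finset.sum_le_sum_of_subset_of_nonneg (Finset.range_subset_range.mpr (by omega))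
      fun n hn _ => sub_nonneg.mpr
        (rearr_antitone x (Nat.lt_succ_iff.mp (Finset.mem_range.mp hn)))
  calc ∑' s, |x s - truncate t x s| + (k + 1) * t
      = ∑ s ∈ S, (|x s| - t) + (k + 1) * t := by rw [htsum]
    _ ≤ ∑ n ∈ Finset.range (k + 1), (rearr x n - t) + (k + 1) * t := by
        linarith
    _ = ∑ n ∈ Finset.range (k + 1), rearr x n := by
        simp only [Finset.sum_sub_distrib, Finset.sum_const, Finset.card_range, nsmul_eq_mul]
        push_cast
        ring

end Truncation

lemma IsDS.sum_rearr_apply_add_le {T : (ℕ → ℝ) →ₗ[ℝ] (ℕ → ℝ)} (hT : IsDS T) {u v : ℕ → ℝ}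
    (hu : Summable fun n => |u n|) (hv : IsBdd v) (m : ℕ) :
    ∑ n ∈ Finset.range m, rearr (T (u + v)) n ≤ ∑' n, |u n| + m * supNorm v := by
  obtain ⟨hTu, hTu_le⟩ := hT.1 u hu
  obtain ⟨hTv, hTv_le⟩ := hT.2 v hv
  have hpointwise : ∀ n, rearr (T (u + v)) n ≤ rearr (T u) n + supNorm v := fun n => by
    rw [map_add]
    exact (rearr_add_le (IsBdd.of_summable_abs hTu) hTv n).trans (add_le_add_right hTv_le _)
  calc ∑ n ∈ Finset.range m, rearr (T (u + v)) n
      ≤ ∑ n ∈ Finset.range m, (rearr (T u) n + supNorm v) :=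
        Finset.sum_le_sum fun n _ => hpointwise n
    _ = ∑ n ∈ Finset.range m, rearr (T u) n + m * supNorm v := by
        rw [Finset.sum_add_distrib, Finset.sum_const, Finset.card_range, nsmul_eq_mul]
    _ ≤ ∑' n, |u n| + m * supNorm v := by
        linarith [sum_rearr_le_tsum_abs hTu m, hTu_le]

theorem IsDS.sum_rearr_apply_le {T : (ℕ → ℝ) →ₗ[ℝ] (ℕ → ℝ)} (hT : IsDS T) {x : ℕ → ℝ}
    (hx : IsBdd x) (k : ℕ) :
    ∑ n ∈ Finset.range (k + 1), rearr (T x) n ≤ ∑ n ∈ Finset.range (k + 1), rearr x n := by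
  set t := rearr x k
  have ht : 0 ≤ t := rearr_nonneg x k
  have key := hT.sum_rearr_apply_add_le (u := x - truncate t x)
    (summable_abs_sub_truncate_rearr hx k) ⟨t, abs_truncate_le (x := x) ht⟩ (k + 1)
  rw [sub_add_cancel, Nat.cast_add_one] at key
  calc ∑ n ∈ Finset.range (k + 1), rearr (T x) n
      ≤ ∑' s, |x s - truncate t x s| + (k + 1) * t :=
        key.trans (add_le_add_right
          (mul_le_mul_of_nonneg_left (supNorm_truncate_le ht) (by positivity)) _)
    _ ≤ _ := tsum_abs_sub_truncate_rearr_add_le hx k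

/-- A Dunford–Schwartz operator leaves every fully symmetric sequence space invariant
and is a contraction on it. -/
theorem stmt5 (T : (ℕ → ℝ) →ₗ[ℝ] (ℕ → ℝ)) (hT : IsDS T) (E : FullySymmSeqSpace) :
    ∀ x ∈ E.carrier, T x ∈ E.carrier ∧ E.N (T x) ≤ E.N x := fun x hx =>
  let hxb := E.bdd x hx
  E.fullySymm x hx (T x) (hT.2 x hxb).1 (hT.sum_rearr_apply_le hxb)
end

section
/- If x ∈ ℓ∞ \ c₀ (x is a bounded sequence not converging to 0), then there exists a Dunford-Schwartz operator T on ℓ∞ such that the averages (1/n) Σ_{k=0}^{n−1} T^k(x) fail to converge coordinatewise. -/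
/-!
Pass to a subsequence `m` along which `|x (m k)| ≥ ε`, and let `T` be the weighted shift that
moves the orbit `m 0 ↦ m 1 ↦ m 2 ↦ ⋯` and fixes every other coordinate. The unimodular weights can
be chosen so that `T^k x (m 0) = ± e k * |x (m k)|` for any prescribed signs `e k = ±1`; a weighted
composition with an injective map is a Dunford–Schwartz operator. Taking `e` constant on the blocks
`[M^j, M^(j+1))` and alternating from block to block, with `M` large compared to `‖x‖∞ / ε`, each
block dominates everything before it, so the Cesàro averages at `m 0` are alternately `≥ ε/2` and
`≤ -ε/2` along `n = M^(j+1)`.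
-/

open Filter Finset Topology

lemma exists_strictMono_le_norm_of_not_tendsto_zero {E : Type*} [SeminormedAddCommGroup E]
    {x : ℕ → E} (hx : ¬ Tendsto x atTop (𝓝 0)) :
    ∃ ε > 0, ∃ m : ℕ → ℕ, StrictMono m ∧ ∀ k, ε ≤ ‖x (m k)‖ := by
  rw [Metric.tendsto_atTop] at hx
  push Not at hx
  obtain ⟨ε, hε, hfreq⟩ := hx
  refine ⟨ε, hε, extraction_of_frequently_atTop (P := fun n => ε ≤ ‖x n‖)
    (frequently_atTop.mpr fun N => ?_)⟩
  simpa only [dist_zero_right] using hfreq N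

section WeightedComposition

variable (τ : ℕ → ℕ) (a : ℕ → ℝ)

def weightedComp : (ℕ → ℝ) →ₗ[ℝ] (ℕ → ℝ) :=
  LinearMap.mulLeft ℝ a ∘ₗ LinearMap.funLeft ℝ ℝ τ

@[simp]
lemma weightedComp_apply (y : ℕ → ℝ) (s : ℕ) : weightedComp τ a y s = a s * y (τ s) := rfl

lemma weightedComp_iterate_apply (k : ℕ) (y : ℕ → ℝ) (s : ℕ) :
    (⇑(weightedComp τ a))^[k] y s = (∏ j ∈ range k, a (τ^[j] s)) * y (τ^[k] s) := by
  induction k generalizing y with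
  | zero => simp
  | succ k ih =>
    rw [Function.iterate_succ_apply, ih, weightedComp_apply, prod_range_succ,
      ← Function.iterate_succ_apply' τ]
    ring

variable {τ a}

lemma isDS_weightedComp (hτ : Function.Injective τ) (ha : ∀ s, |a s| ≤ 1) :
    IsDS (weightedComp τ a) := by
  have hle : ∀ y s, |weightedComp τ a y s| ≤ |y (τ s)| := fun y s => by
    rw [weightedComp_apply, abs_mul]
    exact mul_le_of_le_one_left (abs_nonneg _) (ha s)
  refine ⟨fun y hy => ?_, fun y ⟨C, hC⟩ => ?_⟩
  · have hyτ : Summable fun s => |y (τ s)| := hy.comp_injective hτ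
    have hTy : Summable fun s => |weightedComp τ a y s| :=
      hyτ.of_nonneg_of_le (fun _ => abs_nonneg _) (hle y)
    exact ⟨hTy, hTy.tsum_le_tsum_of_inj τ hτ (fun _ _ => abs_nonneg _) (hle y) hy⟩
  · have hbdd : BddAbove (Set.range fun n => |y n|) := ⟨C, by rintro _ ⟨n, rfl⟩; exact hC n⟩
    exact ⟨⟨C, fun s => (hle y s).trans (hC _)⟩,
      ciSup_le fun s => (hle y s).trans (le_ciSup hbdd (τ s))⟩

end WeightedComposition

section ShiftAlong

variable {m : ℕ → ℕ}

noncomputable def shiftAlong (m : ℕ → ℕ) : ℕ → ℕ :=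
  Function.extend m (fun k => m (k + 1)) id

lemma shiftAlong_apply (hm : Function.Injective m) (k : ℕ) : shiftAlong m (m k) = m (k + 1) :=
  hm.extend_apply _ _ k

lemma shiftAlong_apply_of_notMem_range {s : ℕ} (hs : s ∉ Set.range m) : shiftAlong m s = s :=
  Function.extend_apply' _ _ s hs

lemma shiftAlong_iterate (hm : Function.Injective m) (k : ℕ) :
    (shiftAlong m)^[k] (m 0) = m k := by
  induction k with
  | zero => rfl
  | succ k ih => rw [Function.iterate_succ_apply', ih, shiftAlong_apply hm]

lemma shiftAlong_injective (hm : Function.Injective m) : Function.Injective (shiftAlong m) := by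
  have key : ∀ k t, shiftAlong m (m k) = shiftAlong m t → m k = t := by
    intro k t h
    rw [shiftAlong_apply hm] at h
    by_cases ht : t ∈ Set.range m
    · obtain ⟨l, rfl⟩ := ht
      rw [shiftAlong_apply hm] at h
      rw [Nat.succ_injective (hm h)]
    · rw [shiftAlong_apply_of_notMem_range ht] at h
      exact absurd ⟨k + 1, h⟩ ht
  intro s t h
  by_cases hs : s ∈ Set.range m
  · obtain ⟨k, rfl⟩ := hs
    exact key k t h
  by_cases ht : t ∈ Set.range m
  · obtain ⟨l, rfl⟩ := ht
    exact (key l s h.symm).symm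
  rwa [shiftAlong_apply_of_notMem_range hs, shiftAlong_apply_of_notMem_range ht] at h

end ShiftAlong

lemma prod_range_mul_succ_of_mul_self_eq_one {R : Type*} [CommRing R] {σ : ℕ → R} (hσ : ∀ k, σ k * σ k = 1) (n : ℕ) :
    ∏ j ∈ range n, σ (j + 1) * σ j = σ 0 * σ n := by
  induction n with
  | zero => simp [hσ]
  | succ n ih =>
    rw [prod_range_succ, ih]
    linear_combination σ 0 * σ (n + 1) * hσ n

lemma exists_isDS_iterate_apply_eq (m : ℕ → ℕ) (hm : Function.Injective m) (σ : ℕ → ℝ)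
    (hσ : ∀ k, |σ k| = 1) :
    ∃ T : (ℕ → ℝ) →ₗ[ℝ] (ℕ → ℝ), IsDS T ∧
      ∀ k y, (⇑T)^[k] y (m 0) = σ 0 * σ k * y (m k) := by
  have hσσ : ∀ k, σ k * σ k = 1 := fun k => by rw [← abs_mul_abs_self, hσ, one_mul]
  set a : ℕ → ℝ := Function.extend m (fun j => σ (j + 1) * σ j) 1
  have ha : ∀ s, |a s| ≤ 1 := by
    intro s
    by_cases hs : s ∈ Set.range m
    · obtain ⟨j, rfl⟩ := hs
      simp only [a, hm.extend_apply, abs_mul, hσ, mul_one, le_refl]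
    · simp only [a, Function.extend_apply' _ _ _ hs, Pi.one_apply, abs_one, le_refl]
  refine ⟨weightedComp (shiftAlong m) a, isDS_weightedComp (shiftAlong_injective hm) ha,
    fun k y => ?_⟩
  simp only [weightedComp_iterate_apply, shiftAlong_iterate hm, a, hm.extend_apply,
    prod_range_mul_succ_of_mul_self_eq_one hσσ]

section BlockSign

variable {M : ℕ} {u : ℕ → ℝ} {ε C : ℝ}

noncomputable def blockSign (M k : ℕ) : ℝ := (-1) ^ Nat.log M k

lemma abs_blockSign (M k : ℕ) : |blockSign M k| = 1 := by
  simp [blockSign, abs_pow]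

lemma blockSign_of_mem_Ico {j k : ℕ} (hk : k ∈ Ico (M ^ j) (M ^ (j + 1))) :
    blockSign M k = (-1) ^ j := by
  rw [mem_Ico] at hk
  rw [blockSign, Nat.log_eq_of_pow_le_of_lt_pow hk.1 hk.2]

lemma le_neg_one_pow_mul_sum_blockSign (hM : 0 < M) (hMε : 2 * (C + ε) ≤ ε * M)
    (hu : ∀ k, ε ≤ u k ∧ u k ≤ C) (hε : 0 ≤ ε) (j : ℕ) :
    ε / 2 * (M : ℝ) ^ (j + 1) ≤ (-1) ^ j * ∑ k ∈ range (M ^ (j + 1)), blockSign M k * u k := by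
  have hpow : M ^ j ≤ M ^ (j + 1) := Nat.pow_le_pow_right hM (by omega)
  have hsq : ((-1 : ℝ) ^ j) * (-1) ^ j = 1 := by rw [← mul_pow]; norm_num
  have hlast : (-1) ^ j * ∑ k ∈ Ico (M ^ j) (M ^ (j + 1)), blockSign M k * u k
      = ∑ k ∈ Ico (M ^ j) (M ^ (j + 1)), u k := by
    rw [mul_sum]
    refine sum_congr rfl fun k hk => ?_
    rw [blockSign_of_mem_Ico hk, ← mul_assoc, hsq, one_mul]
  have hlast_ge : ε * ((M : ℝ) ^ (j + 1) - (M : ℝ) ^ j) ≤ ∑ k ∈ Ico (M ^ j) (M ^ (j + 1)), u k := by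
    have h := card_nsmul_le_sum (Ico (M ^ j) (M ^ (j + 1))) u ε fun k _ => (hu k).1
    rwa [Nat.card_Ico, nsmul_eq_mul, Nat.cast_sub hpow, Nat.cast_pow, Nat.cast_pow,
      mul_comm] at h
  have hfirst : |(-1) ^ j * ∑ k ∈ range (M ^ j), blockSign M k * u k| ≤ C * (M : ℝ) ^ j := by
    rw [abs_mul, abs_pow, abs_neg, abs_one, one_pow, one_mul]
    calc |∑ k ∈ range (M ^ j), blockSign M k * u k|
        ≤ ∑ k ∈ range (M ^ j), |blockSign M k * u k| := abs_sum_le_sum_abs _ _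
      _ ≤ ∑ k ∈ range (M ^ j), C := sum_le_sum fun k _ => by
          rw [abs_mul, abs_blockSign, one_mul, abs_le]
          exact ⟨by linarith [hu k], (hu k).2⟩
      _ = C * (M : ℝ) ^ j := by simp [mul_comm]
  have hMj : (0 : ℝ) ≤ (M : ℝ) ^ j := by positivity
  rw [← sum_range_add_sum_Ico _ hpow, mul_add, hlast, pow_succ]
  rw [pow_succ] at hlast_ge
  nlinarith [neg_abs_le ((-1) ^ j * ∑ k ∈ range (M ^ j), blockSign M k * u k),
    mul_le_mul_of_nonneg_left hMε hMj]

lemma not_tendsto_average_blockSign (hM : 1 < M) (hMε : 2 * (C + ε) ≤ ε * M)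
    (hu : ∀ k, ε ≤ u k ∧ u k ≤ C) (hε : 0 < ε) (L : ℝ) :
    ¬ Tendsto (fun n : ℕ => (∑ k ∈ range n, blockSign M k * u k) / n) atTop (𝓝 L) := by
  set A : ℕ → ℝ := fun n => (∑ k ∈ range n, blockSign M k * u k) / n
  have hA : ∀ j, ε / 2 ≤ (-1) ^ j * A (M ^ (j + 1)) := fun j => by
    have hMpos : (0 : ℝ) < (M : ℝ) ^ (j + 1) := by positivity
    rw [mul_div_assoc', le_div_iff₀ (by exact_mod_cast hMpos)]
    exact_mod_cast le_neg_one_pow_mul_sum_blockSign (by omega) hMε hu hε.le j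
  -- consecutive block averages have opposite signs and size `≥ ε/2`, so they stay `ε` apart
  have hgap : ∀ j, ε ≤ |A (M ^ (j + 1)) - A (M ^ (j + 1 + 1))| := fun j => by
    have h := hA (j + 1)
    rw [pow_succ] at h
    calc ε ≤ (-1) ^ j * (A (M ^ (j + 1)) - A (M ^ (j + 1 + 1))) := by linarith [hA j]
      _ ≤ |(-1) ^ j * (A (M ^ (j + 1)) - A (M ^ (j + 1 + 1)))| := le_abs_self _
      _ = _ := by rw [abs_mul, abs_pow, abs_neg, abs_one, one_pow, one_mul]
  intro hL
  have hsub : Tendsto (fun j => A (M ^ (j + 1)) - A (M ^ (j + 1 + 1))) atTop (𝓝 0) := by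
    have hpow := (tendsto_pow_atTop_atTop_of_one_lt hM).comp (tendsto_add_atTop_nat 1)
    simpa using (hL.comp hpow).sub (hL.comp (hpow.comp (tendsto_add_atTop_nat 1)))
  obtain ⟨j, hj⟩ := (Metric.tendsto_atTop.mp hsub ε hε)
  have := hj j le_rfl
  rw [Real.dist_eq, sub_zero] at this
  linarith [hgap j]

lemma exists_blockSign_not_tendsto_average (hε : 0 < ε) (hu : ∀ k, ε ≤ u k ∧ u k ≤ C) :
    ∃ M : ℕ, ∀ L : ℝ,
      ¬ Tendsto (fun n : ℕ => (∑ k ∈ range n, blockSign M k * u k) / n) atTop (𝓝 L) := by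
  obtain ⟨M, hM⟩ := exists_nat_gt (max (2 * (C + ε) / ε) 1)
  rw [max_lt_iff, div_lt_iff₀ hε, mul_comm _ ε] at hM
  exact ⟨M, not_tendsto_average_blockSign (by exact_mod_cast hM.2) hM.1.le hu hε⟩

end BlockSign

lemma exists_isDS_cesaro_eq_mul (x : ℕ → ℝ) (m : ℕ → ℕ) (hm : Function.Injective m)
    (hxm : ∀ k, x (m k) ≠ 0) (e : ℕ → ℝ) (he : ∀ k, |e k| = 1) :
    ∃ T : (ℕ → ℝ) →ₗ[ℝ] (ℕ → ℝ), IsDS T ∧ ∃ c ≠ 0, ∀ n,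
      cesaro T n x (m 0) = c * ((∑ k ∈ range n, e k * |x (m k)|) / n) := by
  set σ : ℕ → ℝ := fun k => e k * SignType.sign (x (m k))
  have hσ : ∀ k, |σ k| = 1 := fun k => by
    rcases (hxm k).lt_or_gt with h | h <;> simp [σ, he, h]
  have hσx : ∀ k, σ k * x (m k) = e k * |x (m k)| := fun k => by
    simp only [σ, mul_assoc, sign_mul_self]
  obtain ⟨T, hT, hTk⟩ := exists_isDS_iterate_apply_eq m hm σ hσ
  refine ⟨T, hT, σ 0, abs_ne_zero.mp (by simp [hσ]), fun n => ?_⟩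
  simp only [cesaro, hTk, mul_assoc, hσx]
  rw [← mul_sum, mul_div_assoc]

/-- For any bounded sequence `x` not converging to `0` there is a Dunford–Schwartz
operator whose Cesàro averages of `x` fail to converge coordinatewise. -/
theorem stmt13 (x : ℕ → ℝ) (hx : IsBdd x) (hx0 : ¬ Tendsto x atTop (nhds 0)) :
    ∃ T : (ℕ → ℝ) →ₗ[ℝ] (ℕ → ℝ), IsDS T ∧
      ∃ s : ℕ, ∀ L : ℝ, ¬ Tendsto (fun n => cesaro T n x s) atTop (nhds L) := by
  obtain ⟨ε, hε, m, hm, hmε⟩ := exists_strictMono_le_norm_of_not_tendsto_zero hx0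
  obtain ⟨C, hC⟩ := hx
  obtain ⟨M, hosc⟩ := exists_blockSign_not_tendsto_average (u := fun k => ‖x (m k)‖) hε
    fun k => ⟨hmε k, hC _⟩
  obtain ⟨T, hT, c, hc, hces⟩ := exists_isDS_cesaro_eq_mul x m hm.injective
    (fun k => norm_pos_iff.mp (hε.trans_le (hmε k))) (blockSign M) (abs_blockSign M)
  refine ⟨T, hT, m 0, fun L hL => hosc (c⁻¹ * L) ?_⟩
  simpa only [hces, inv_mul_cancel_left₀ hc, Real.norm_eq_abs] using hL.const_mul c⁻¹
end
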